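/- Let G be a group and H ≤ G a subgroup of finite index. Suppose there exist L ≥ 1, a representation σ of H on ℓ¹ = ℓ¹ℕ uniformly bounded by L, and a cocycle β for σ with sup_{h∈H} ‖β(h)‖ = ∞. Then there exist a representation π of G on ℓ¹ uniformly bounded by L and a cocycle α for π with sup_{g∈G} ‖α(g)‖ = ∞. In other words, if a finite index subgroup of G admits an affine uniformly L-Lipschitz action on ℓ¹ with unbounded orbits, then so does G. -/

import Mathlib

/-!
Induce the action from `H` to `G`. With the transversal `x ↦ x.out` of `G ⧸ H`, the elements
`c g x = x.out⁻¹ * g * (g⁻¹ • x).out` lie in `H` and satisfy `c (g * h) x = c g x * c h (g⁻¹ • x)`,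
so `(π g f) x = σ (c g x) (f (g⁻¹ • x))` and `(α g) x = β (c g x)` define a representation and
a cocycle of `G` on the `ℓ¹`-sum of `[G : H]` copies of `ℓ¹`. As `G` permutes the cosets and
norms add up in an `ℓ¹`-sum, `‖π g‖ ≤ L`. For the trivial coset `x₀`, `t = x₀.out` lies in `H`
and `c (t * a * t⁻¹) x₀ = a`, so the coordinate of `α` at `x₀` already takes every value of `β`.
Finally, a finite `ℓ¹`-sum of copies of `ℓ¹ℕ` is `ℓ¹(ι × ℕ) ≅ ℓ¹ℕ`.
-/

section LOne

variable {𝕜 α β ι E : Type*} [NormedAddCommGroup E]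

theorem memℓp_one_iff {f : α → E} : Memℓp f 1 ↔ Summable fun i => ‖f i‖ := by
  simpa using memℓp_gen_iff (E := fun _ : α => E) (p := 1) (f := f) (by simp)

namespace lp

theorem norm_eq_tsum_norm (f : lp (fun _ : α => E) 1) : ‖f‖ = ∑' i, ‖f i‖ := by
  simpa using norm_eq_tsum_rpow (E := fun _ : α => E) (p := 1) (by simp) f

theorem summable_norm (f : lp (fun _ : α => E) 1) : Summable fun i => ‖f i‖ :=
  memℓp_one_iff.1 f.2

variable (𝕜) [NormedField 𝕜] [NormedSpace 𝕜 E]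

def oneCongrLeft (e : α ≃ β) : lp (fun _ : α => E) 1 ≃ₗᵢ[𝕜] lp (fun _ : β => E) 1 where
  toFun f := ⟨fun b => f (e.symm b), memℓp_one_iff.2 <| e.symm.summable_iff.2 (summable_norm f)⟩
  invFun f := ⟨fun a => f (e a), memℓp_one_iff.2 <| e.summable_iff.2 (summable_norm f)⟩
  left_inv f := by ext; simp
  right_inv f := by ext; simp
  map_add' _ _ := rfl
  map_smul' _ _ := rfl
  norm_map' f := by
    simp only [LinearEquiv.coe_mk, norm_eq_tsum_norm]
    exact e.symm.tsum_eq fun a => ‖f a‖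

variable (ι) [Fintype ι]

def piLpOneEquivProd :
    PiLp 1 (fun _ : ι => lp (fun _ : α => E) 1) ≃ₗᵢ[𝕜] lp (fun _ : ι × α => E) 1 where
  toFun f := ⟨fun p => f p.1 p.2, memℓp_one_iff.2 <|
    (summable_prod_of_nonneg fun _ => norm_nonneg _).2
      ⟨fun i => summable_norm (f i), Summable.of_finite⟩⟩
  invFun f := WithLp.toLp 1 fun i =>
    ⟨fun a => f (i, a), memℓp_one_iff.2 <| (summable_norm f).prod_factor i⟩
  left_inv f := by ext; rfl
  right_inv f := by ext; rfl
  map_add' _ _ := rfl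
  map_smul' _ _ := rfl
  norm_map' f := by
    simp only [LinearEquiv.coe_mk, norm_eq_tsum_norm, PiLp.norm_eq_of_L1]
    rw [(summable_norm _).tsum_prod, tsum_fintype]
    rfl

theorem nonempty_piLpOne_linearIsometryEquiv_nat [Nonempty ι] :
    Nonempty (PiLp 1 (fun _ : ι => lp (fun _ : ℕ => E) 1) ≃ₗᵢ[𝕜] lp (fun _ : ℕ => E) 1) :=
  (nonempty_equiv_of_countable (α := ι × ℕ) (β := ℕ)).map fun e =>
    (piLpOneEquivProd 𝕜 ι).trans (oneCongrLeft 𝕜 e)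

end lp

end LOne

section AffineAction

variable {𝕜 G V W : Type*} [NontriviallyNormedField 𝕜]
  [NormedAddCommGroup V] [NormedSpace 𝕜 V] [NormedAddCommGroup W] [NormedSpace 𝕜 W]

variable (𝕜 G V) in
def HasUnboundedAffineAction [Monoid G] (L : ℝ) : Prop :=
  ∃ π : G → (V →L[𝕜] V),
    π 1 = 1 ∧ (∀ g h : G, π (g * h) = π g ∘L π h) ∧ (∀ g : G, ‖π g‖ ≤ L) ∧
    ∃ α : G → V, (∀ g h : G, α (g * h) = α g + π g (α h)) ∧ (∀ M : ℝ, ∃ g : G, M < ‖α g‖)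

namespace HasUnboundedAffineAction

theorem of_linearIsometryEquiv [Monoid G] {L : ℝ} (e : V ≃ₗᵢ[𝕜] W)
    (h : HasUnboundedAffineAction 𝕜 G V L) : HasUnboundedAffineAction 𝕜 G W L := by
  obtain ⟨π, hπ1, hπmul, hπL, α, hα, hαunb⟩ := h
  let c := e.toContinuousLinearEquiv.conjContinuousAlgEquiv
  refine ⟨fun g => c (π g), by simp [hπ1],
    fun g h => (congrArg c (hπmul g h)).trans (map_mul c (π g) (π h)), fun g => ?_,
    fun g => e (α g), fun g h => by simp [hα, c], fun M => by simpa using hαunb M⟩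
  calc ‖c (π g)‖ ≤ ‖π g‖ := by
        refine ContinuousLinearMap.opNorm_le_bound _ (norm_nonneg _) fun x => ?_
        simpa [c] using (π g).le_opNorm (e.symm x)
    _ ≤ L := hπL g

end HasUnboundedAffineAction

namespace Subgroup

variable [Group G] (H : Subgroup G)

theorem out_inv_mul_mul_out_smul_mem (g : G) (x : G ⧸ H) :
    x.out⁻¹ * g * (g⁻¹ • x).out ∈ H := by
  have hx : (x.out : G ⧸ H) = (g * (g⁻¹ • x).out : G) := by
    rw [← smul_eq_mul, ← MulAction.Quotient.smul_mk, QuotientGroup.out_eq',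
      QuotientGroup.out_eq', smul_inv_smul]
  simpa [mul_assoc] using QuotientGroup.eq.1 hx

noncomputable def cosetCocycle (g : G) (x : G ⧸ H) : H :=
  ⟨x.out⁻¹ * g * (g⁻¹ • x).out, H.out_inv_mul_mul_out_smul_mem g x⟩

@[simp]
theorem cosetCocycle_one (x : G ⧸ H) : H.cosetCocycle 1 x = 1 := by
  ext; simp [cosetCocycle]

theorem cosetCocycle_mul (g h : G) (x : G ⧸ H) :
    H.cosetCocycle (g * h) x = H.cosetCocycle g x * H.cosetCocycle h (g⁻¹ • x) := by
  ext
  simp only [cosetCocycle, coe_mul, mul_inv_rev, mul_smul]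
  group

theorem exists_cosetCocycle_eq (a : H) :
    ∃ g : G, H.cosetCocycle g ((1 : G) : G ⧸ H) = a := by
  set t := ((1 : G) : G ⧸ H).out with ht_def
  have ht : t ∈ H := by
    simpa using QuotientGroup.eq.1 (QuotientGroup.out_eq' ((1 : G) : G ⧸ H)).symm
  refine ⟨t * a * t⁻¹, Subtype.ext ?_⟩
  have hfix : (t * a * t⁻¹)⁻¹ • ((1 : G) : G ⧸ H) = ((1 : G) : G ⧸ H) := by
    rw [MulAction.Quotient.smul_mk, QuotientGroup.eq]
    simpa using H.mul_mem (H.mul_mem ht a.2) (H.inv_mem ht)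
  change t⁻¹ * (t * a * t⁻¹) * (_ • _ : G ⧸ H).out = a
  rw [hfix, ← ht_def]
  group

variable (σ : H → V →L[𝕜] V) (β : H → V)

noncomputable def inducedRep (g : G) :
    PiLp 1 (fun _ : G ⧸ H => V) →L[𝕜] PiLp 1 (fun _ : G ⧸ H => V) :=
  (PiLp.continuousLinearEquiv 1 𝕜 _).symm.toContinuousLinearMap ∘L
    ContinuousLinearMap.pi (fun x => σ (H.cosetCocycle g x) ∘L .proj (g⁻¹ • x)) ∘L
    (PiLp.continuousLinearEquiv 1 𝕜 _).toContinuousLinearMap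

@[simp]
theorem inducedRep_apply (g : G) (f : PiLp 1 (fun _ : G ⧸ H => V)) (x : G ⧸ H) :
    H.inducedRep σ g f x = σ (H.cosetCocycle g x) (f (g⁻¹ • x)) := rfl

noncomputable def inducedCocycle (g : G) : PiLp 1 (fun _ : G ⧸ H => V) :=
  WithLp.toLp 1 fun x => β (H.cosetCocycle g x)

variable {H σ β}

theorem inducedRep_one (hσ : σ 1 = 1) : H.inducedRep σ 1 = 1 := by
  ext f x; simp [hσ]

theorem inducedRep_mul (hσ : ∀ a b, σ (a * b) = σ a ∘L σ b) (g h : G) :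
    H.inducedRep σ (g * h) = H.inducedRep σ g ∘L H.inducedRep σ h := by
  ext f x; simp [cosetCocycle_mul, hσ, mul_smul]

theorem norm_inducedRep_le [Fintype (G ⧸ H)] {L : ℝ} (hσ : ∀ a, ‖σ a‖ ≤ L) (g : G) :
    ‖H.inducedRep σ g‖ ≤ L := by
  refine ContinuousLinearMap.opNorm_le_bound _ ((norm_nonneg _).trans (hσ 1)) fun f => ?_
  calc ‖H.inducedRep σ g f‖ = ∑ x, ‖σ (H.cosetCocycle g x) (f (g⁻¹ • x))‖ := by
        simp [PiLp.norm_eq_of_L1]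
    _ ≤ ∑ x, L * ‖f (g⁻¹ • x)‖ := Finset.sum_le_sum fun x _ =>
        ((σ _).le_opNorm _).trans (by gcongr; exact hσ _)
    _ = L * ‖f‖ := by
        rw [← Finset.mul_sum, PiLp.norm_eq_of_L1]
        congr 1
        exact Equiv.sum_comp (MulAction.toPerm g⁻¹) fun x => ‖f x‖

theorem inducedCocycle_mul (hβ : ∀ a b, β (a * b) = β a + σ a (β b)) (g h : G) :
    H.inducedCocycle β (g * h) =
      H.inducedCocycle β g + H.inducedRep σ g (H.inducedCocycle β h) := by
  ext x; simp [inducedCocycle, cosetCocycle_mul, hβ]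

end Subgroup

namespace HasUnboundedAffineAction

theorem induced [Group G] {H : Subgroup G} [Fintype (G ⧸ H)] {L : ℝ}
    (h : HasUnboundedAffineAction 𝕜 H V L) :
    HasUnboundedAffineAction 𝕜 G (PiLp 1 fun _ : G ⧸ H => V) L := by
  obtain ⟨σ, hσ1, hσmul, hσL, β, hβ, hβunb⟩ := h
  refine ⟨H.inducedRep σ, H.inducedRep_one hσ1, H.inducedRep_mul hσmul, H.norm_inducedRep_le hσL,
    H.inducedCocycle β, H.inducedCocycle_mul hβ, fun M => ?_⟩
  obtain ⟨a, ha⟩ := hβunb M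
  obtain ⟨g, hg⟩ := H.exists_cosetCocycle_eq a
  exact ⟨g, ha.trans_le (hg ▸ PiLp.norm_apply_le (H.inducedCocycle β g) _)⟩

end HasUnboundedAffineAction

end AffineAction

theorem finiteIndex_unbounded_ell1_action_induces_general {G : Type*} [Group G]
    (H : Subgroup G) [H.FiniteIndex] (L : ℝ)
    (σ : ↥H → (lp (fun _ : ℕ => ℝ) 1 →L[ℝ] lp (fun _ : ℕ => ℝ) 1))
    (hσ1 : σ 1 = 1) (hσmul : ∀ a b : ↥H, σ (a * b) = σ a ∘L σ b)
    (hσbdd : ∀ a : ↥H, ‖σ a‖ ≤ L)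
    (β : ↥H → lp (fun _ : ℕ => ℝ) 1)
    (hβ : ∀ a b : ↥H, β (a * b) = β a + σ a (β b))
    (hβunb : ∀ M : ℝ, ∃ a : ↥H, M < ‖β a‖) :
    ∃ π : G → (lp (fun _ : ℕ => ℝ) 1 →L[ℝ] lp (fun _ : ℕ => ℝ) 1),
      π 1 = 1 ∧ (∀ g h : G, π (g * h) = π g ∘L π h) ∧ (∀ g : G, ‖π g‖ ≤ L) ∧
      ∃ α : G → lp (fun _ : ℕ => ℝ) 1,
        (∀ g h : G, α (g * h) = α g + π g (α h)) ∧
        (∀ M : ℝ, ∃ g : G, M < ‖α g‖) := by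
  have hH : HasUnboundedAffineAction ℝ H (lp (fun _ : ℕ => ℝ) 1) L :=
    ⟨σ, hσ1, hσmul, hσbdd, β, hβ, hβunb⟩
  have := Fintype.ofFinite (G ⧸ H)
  obtain ⟨e⟩ := lp.nonempty_piLpOne_linearIsometryEquiv_nat ℝ (G ⧸ H) (E := ℝ)
  exact hH.induced.of_linearIsometryEquiv e

/-- If a finite index subgroup `H` of a group `G` admits an affine uniformly `L`-Lipschitz
action on `ℓ¹ = ℓ¹ℕ` with unbounded orbits (i.e. a representation on `ℓ¹` uniformly bounded by
`L` with an unbounded cocycle), then so does `G`. -/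
theorem finiteIndex_unbounded_ell1_action_induces {G : Type*} [Group G]
    (H : Subgroup G) [H.FiniteIndex] (L : ℝ) (hL : 1 ≤ L)
    (σ : ↥H → (lp (fun _ : ℕ => ℝ) 1 →L[ℝ] lp (fun _ : ℕ => ℝ) 1))
    (hσ1 : σ 1 = 1) (hσmul : ∀ a b : ↥H, σ (a * b) = σ a ∘L σ b)
    (hσbdd : ∀ a : ↥H, ‖σ a‖ ≤ L)
    (β : ↥H → lp (fun _ : ℕ => ℝ) 1)
    (hβ : ∀ a b : ↥H, β (a * b) = β a + σ a (β b))
    (hβunb : ∀ M : ℝ, ∃ a : ↥H, M < ‖β a‖) :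
    ∃ π : G → (lp (fun _ : ℕ => ℝ) 1 →L[ℝ] lp (fun _ : ℕ => ℝ) 1),
      π 1 = 1 ∧ (∀ g h : G, π (g * h) = π g ∘L π h) ∧ (∀ g : G, ‖π g‖ ≤ L) ∧
      ∃ α : G → lp (fun _ : ℕ => ℝ) 1,
        (∀ g h : G, α (g * h) = α g + π g (α h)) ∧
        (∀ M : ℝ, ∃ g : G, M < ‖α g‖) :=
  finiteIndex_unbounded_ell1_action_induces_general H L σ hσ1 hσmul hσbdd β hβ hβunb
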